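/- Let (X_n) be a transient Markov chain on a countable state space Y with initial state ρ, Green function G, and Martin kernel K(x,y) = G(x,y)/G(ρ,y). For any subset Λ ⊆ Y, the probability that the chain ever visits Λ is at least (1/2)·Cap_K(Λ). -/

import Mathlib

/-!
Second moment method. For weights `μ` on `Λ` summing to one, with finite energy `I` for the
Martin kernel, let `Z = ∑_y μ(y) / G(ρ,y) · L_y`, where `L_y` is the number of visits to `y`.
Then `E Z = 1`, and the Markov property gives
`E[L_x L_y] ≤ G(ρ,x) G(x,y) + G(ρ,y) G(y,x)`, hence `E Z² ≤ 2 I`. As `Z` vanishes off the event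
that the chain hits `Λ`, Cauchy–Schwarz yields `1 = (E Z)² ≤ E Z² · P(hit Λ) ≤ 2 I · P(hit Λ)`.

The Markov property is derived from the cylinder formula alone: `{X_m = x, X_(m+k) = y}` is a
countable disjoint union of cylinders, and its paths are exactly the concatenations of a path
of length `m` ending at `x` with a path of length `k` from `x` to `y`.
-/

open MeasureTheory ENNReal
open scoped Classical

-- For `Λ = ∅` the infimum is over an empty type, so `capK K ∅ = ⊤⁻¹ = 0`.
noncomputable def capK {Y : Type*} (K : Y → Y → ℝ≥0∞) (Λ : Set Y) : ℝ≥0∞ :=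
  (⨅ μ : {μ : Y → ℝ≥0∞ // (∑' y, μ y) = 1 ∧ ∀ y ∉ Λ, μ y = 0},
    ∑' x, ∑' y, K x y * μ.1 x * μ.1 y)⁻¹

theorem lintegral_sq_le_mul_measure_ne_zero {Ω : Type*} [MeasurableSpace Ω] (μ : Measure Ω)
    {f : Ω → ℝ≥0∞} (hf : Measurable f) :
    (∫⁻ ω, f ω ∂μ) ^ 2 ≤ (∫⁻ ω, f ω ^ 2 ∂μ) * μ {ω | f ω ≠ 0} := by
  set A := {ω | f ω ≠ 0}
  have hA : MeasurableSet A := (hf (measurableSet_singleton 0)).compl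
  have hfA : ∀ ω, f ω = f ω * A.indicator 1 ω := fun ω => by
    by_cases h : f ω = 0 <;> simp [A, h]
  have hA2 : ∀ ω, A.indicator (1 : Ω → ℝ≥0∞) ω ^ (2 : ℝ) = A.indicator 1 ω := fun ω => by
    by_cases h : ω ∈ A <;> simp [h]
  have hCS : ∫⁻ ω, f ω ∂μ ≤ (∫⁻ ω, f ω ^ 2 ∂μ) ^ (1 / 2 : ℝ) * μ A ^ (1 / 2 : ℝ) := by
    calc ∫⁻ ω, f ω ∂μ = ∫⁻ ω, f ω * A.indicator 1 ω ∂μ := lintegral_congr hfA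
      _ ≤ (∫⁻ ω, f ω ^ (2 : ℝ) ∂μ) ^ (1 / 2 : ℝ)
          * (∫⁻ ω, A.indicator 1 ω ^ (2 : ℝ) ∂μ) ^ (1 / 2 : ℝ) :=
        ENNReal.lintegral_mul_le_Lp_mul_Lq μ Real.HolderConjugate.two_two hf.aemeasurable
          (aemeasurable_one.indicator hA)
      _ = (∫⁻ ω, f ω ^ 2 ∂μ) ^ (1 / 2 : ℝ) * μ A ^ (1 / 2 : ℝ) := by
        simp only [hA2, lintegral_indicator_one hA, ENNReal.rpow_two]
  calc (∫⁻ ω, f ω ∂μ) ^ 2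
      ≤ ((∫⁻ ω, f ω ^ 2 ∂μ) ^ (1 / 2 : ℝ) * μ A ^ (1 / 2 : ℝ)) ^ 2 := by gcongr
    _ = (∫⁻ ω, f ω ^ 2 ∂μ) * μ A := by
      rw [← ENNReal.mul_rpow_of_nonneg _ _ (by norm_num), ← ENNReal.rpow_two,
        ← ENNReal.rpow_mul]
      norm_num

theorem ENNReal.tsum_mul_tsum {α β : Type*} (f : α → ℝ≥0∞) (g : β → ℝ≥0∞) :
    (∑' a, f a) * ∑' b, g b = ∑' q : α × β, f q.1 * g q.2 := by
  rw [ENNReal.tsum_prod', ← ENNReal.tsum_mul_right]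
  exact tsum_congr fun a => ENNReal.tsum_mul_left.symm

theorem tsum_prod_le_tsum_add_tsum (F : ℕ × ℕ → ℝ≥0∞) :
    ∑' q, F q ≤ ∑' q : ℕ × ℕ, F (q.1, q.1 + q.2) + ∑' q : ℕ × ℕ, F (q.1 + q.2, q.1) := by
  let split : (ℕ × ℕ) ⊕ (ℕ × ℕ) → ℕ × ℕ :=
    Sum.elim (fun q => (q.1, q.1 + q.2)) (fun q => (q.1 + q.2, q.1))
  have hsplit : Function.Surjective split := by
    rintro ⟨i, j⟩
    rcases le_total i j with h | h
    · exact ⟨.inl (i, j - i), by simp [split]; omega⟩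
    · exact ⟨.inr (j, i - j), by simp [split]; omega⟩
  calc ∑' q, F q ≤ ∑' s, F (split s) := ENNReal.tsum_le_tsum_comp_of_surjective hsplit F
    _ = _ := ENNReal.summable.tsum_sum ENNReal.summable

namespace MarkovChain

variable {Y : Type*}

noncomputable def pathWeight (p : Y → Y → ℝ≥0∞) (x : Y) (n : ℕ) (v : ℕ → Y) : ℝ≥0∞ :=
  (if v 0 = x then 1 else 0) * ∏ i ∈ Finset.range n, p (v i) (v (i + 1))

def stopAt (n : ℕ) (v : ℕ → Y) : ℕ → Y := fun i => v (min i n)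

def concatAt (m : ℕ) (g h : ℕ → Y) : ℕ → Y := fun i => if i ≤ m then g i else h (i - m)

variable (Y) in
abbrev StoppedPaths (n : ℕ) (Q : (ℕ → Y) → Prop) : Type _ :=
  {v : ℕ → Y // stopAt n v = v ∧ Q v}

lemma stopAt_apply_of_le {n i : ℕ} (v : ℕ → Y) (h : i ≤ n) : stopAt n v i = v i := by
  simp [stopAt, h]

lemma stopAt_idem (n : ℕ) (v : ℕ → Y) : stopAt n (stopAt n v) = stopAt n v := by
  funext i; simp [stopAt]

lemma concatAt_of_le {m i : ℕ} {g h : ℕ → Y} (hi : i ≤ m) : concatAt m g h i = g i := if_pos hi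

lemma concatAt_add {m : ℕ} {g h : ℕ → Y} (hgh : g m = h 0) (j : ℕ) :
    concatAt m g h (m + j) = h j := by
  rcases j with _ | j
  · simpa [concatAt] using hgh
  · simp [concatAt]

instance [Countable Y] (n : ℕ) (Q : (ℕ → Y) → Prop) : Countable (StoppedPaths Y n Q) := by
  refine Function.Injective.countable
    (f := fun v : StoppedPaths Y n Q => fun i : Fin (n + 1) => v.1 i) ?_
  intro v w hvw
  refine Subtype.ext (funext fun i => ?_)
  rw [← congrFun v.2.1 i, ← congrFun w.2.1 i]
  exact congrFun hvw ⟨min i n, by omega⟩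

lemma forall_le_eq_iff_stopAt_eq {n : ℕ} {ω v : ℕ → Y} (hv : stopAt n v = v) :
    (∀ i ≤ n, ω i = v i) ↔ stopAt n ω = v := by
  refine ⟨fun h => ?_, fun h i hi => ?_⟩
  · rw [← hv]
    funext i
    exact h _ (min_le_right i n)
  · rw [← h, stopAt_apply_of_le ω hi]

lemma stopAt_concatAt {m k : ℕ} {g h : ℕ → Y} (hgh : g m = h 0) (hh : stopAt k h = h) :
    stopAt (m + k) (concatAt m g h) = concatAt m g h := by
  funext i
  rcases le_or_gt i (m + k) with hi | hi
  · exact stopAt_apply_of_le _ hi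
  · obtain ⟨j, rfl⟩ : ∃ j, i = m + j := ⟨i - m, by omega⟩
    simp only [stopAt, min_eq_right hi.le, concatAt_add hgh]
    calc h k = h (min j k) := by rw [min_eq_right (by omega)]
      _ = h j := congrFun hh j

def concatEquiv (m k : ℕ) (x y : Y) :
    StoppedPaths Y m (· m = x) × StoppedPaths Y k (fun h => h 0 = x ∧ h k = y) ≃
      StoppedPaths Y (m + k) (fun v => v m = x ∧ v (m + k) = y) where
  toFun gh := ⟨concatAt m gh.1.1 gh.2.1,
    stopAt_concatAt (gh.1.2.2.trans gh.2.2.2.1.symm) gh.2.2.1,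
    (concatAt_of_le le_rfl).trans gh.1.2.2,
    (concatAt_add (gh.1.2.2.trans gh.2.2.2.1.symm) k).trans gh.2.2.2.2⟩
  invFun v :=
    ⟨⟨stopAt m v.1, stopAt_idem m v.1, (stopAt_apply_of_le _ le_rfl).trans v.2.2.1⟩,
      ⟨stopAt k (fun j => v.1 (m + j)), stopAt_idem k _, by simpa [stopAt] using v.2.2.1,
        (stopAt_apply_of_le _ le_rfl).trans v.2.2.2⟩⟩
  left_inv := by
    rintro ⟨⟨g, hg, hgm⟩, ⟨h, hh, hh0, hhk⟩⟩
    have hgh : g m = h 0 := hgm.trans hh0.symm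
    refine Prod.ext (Subtype.ext (funext fun i => ?_)) (Subtype.ext (funext fun j => ?_))
    · simp only [stopAt, concatAt_of_le (min_le_right i m)]
      exact congrFun hg i
    · simp only [stopAt, concatAt_add hgh]
      exact congrFun hh j
  right_inv := by
    rintro ⟨v, hv, -⟩
    refine Subtype.ext (funext fun i => ?_)
    change concatAt m (stopAt m v) (stopAt k fun j => v (m + j)) i = v i
    unfold concatAt
    split_ifs with hi
    · exact stopAt_apply_of_le v hi
    · rw [← congrFun hv i]
      simp only [stopAt]
      congr 1
      omega

lemma pathWeight_concatAt (p : Y → Y → ℝ≥0∞) {ρ x : Y} {m k : ℕ} {g h : ℕ → Y}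
    (hg : g m = x) (hh : h 0 = x) :
    pathWeight p ρ (m + k) (concatAt m g h) = pathWeight p ρ m g * pathWeight p x k h := by
  have hgh : g m = h 0 := hg.trans hh.symm
  have hinit : ∏ i ∈ Finset.range m, p (concatAt m g h i) (concatAt m g h (i + 1))
      = ∏ i ∈ Finset.range m, p (g i) (g (i + 1)) :=
    Finset.prod_congr rfl fun i hi => by
      rw [concatAt_of_le (Finset.mem_range.1 hi).le, concatAt_of_le (Finset.mem_range.1 hi)]
  have htail : ∏ i ∈ Finset.range k, p (concatAt m g h (m + i)) (concatAt m g h (m + i + 1))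
      = ∏ i ∈ Finset.range k, p (h i) (h (i + 1)) :=
    Finset.prod_congr rfl fun i _ => by rw [concatAt_add hgh, add_assoc, concatAt_add hgh]
  simp only [pathWeight, Finset.prod_range_add, hinit, htail, concatAt_of_le (Nat.zero_le m),
    if_pos hh]
  ring

noncomputable def visitCount (y : Y) (ω : ℕ → Y) : ℝ≥0∞ :=
  ∑' n, {ω' : ℕ → Y | ω' n = y}.indicator 1 ω

noncomputable def weightedVisits (c : Y → ℝ≥0∞) (ω : ℕ → Y) : ℝ≥0∞ :=
  ∑' y, c y * visitCount y ω

lemma weightedVisits_eq_zero_iff {c : Y → ℝ≥0∞} {ω : ℕ → Y} :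
    weightedVisits c ω = 0 ↔ ∀ n, c (ω n) = 0 := by
  simp only [weightedVisits, visitCount, ENNReal.tsum_eq_zero, mul_eq_zero,
    Set.indicator_apply_eq_zero, Set.mem_ofPred_eq, Pi.one_apply, one_ne_zero, imp_false]
  refine ⟨fun h n => (h (ω n)).resolve_right fun hy => hy n rfl, fun h y => ?_⟩
  refine or_iff_not_imp_right.2 fun hy => ?_
  obtain ⟨n, rfl⟩ := not_forall_not.1 hy
  exact h n

noncomputable def energy (K : Y → Y → ℝ≥0∞) (μ : Y → ℝ≥0∞) : ℝ≥0∞ :=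
  ∑' x, ∑' y, K x y * μ x * μ y

lemma tsum_mul_green_le_two_mul_energy (G : Y → Y → ℝ≥0∞) (ρ : Y) (μ : Y → ℝ≥0∞) :
    ∑' q : Y × Y, μ q.1 / G ρ q.1 * (μ q.2 / G ρ q.2) *
        (G ρ q.1 * G q.1 q.2 + G ρ q.2 * G q.2 q.1)
      ≤ 2 * energy (fun x y => G x y / G ρ y) μ := by
  have key (a b : Y) : μ a / G ρ a * (μ b / G ρ b) * (G ρ a * G a b)
      ≤ G a b / G ρ b * μ a * μ b :=
    calc μ a / G ρ a * (μ b / G ρ b) * (G ρ a * G a b)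
        = G ρ a / G ρ a * (G a b / G ρ b * μ a * μ b) := by simp only [div_eq_mul_inv]; ring
      _ ≤ G a b / G ρ b * μ a * μ b :=
        mul_le_of_le_one_left zero_le ENNReal.div_self_le_one
  calc _ ≤ ∑' q : Y × Y, (G q.1 q.2 / G ρ q.2 * μ q.1 * μ q.2
          + G q.2 q.1 / G ρ q.1 * μ q.2 * μ q.1) :=
        ENNReal.tsum_le_tsum fun q => by
          rw [mul_add]
          exact add_le_add (key q.1 q.2) (mul_comm (μ q.1 / _) (μ q.2 / _) ▸ key q.2 q.1)
    _ = 2 * energy (fun x y => G x y / G ρ y) μ := by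
      have hswap := (Equiv.prodComm Y Y).tsum_eq fun q => G q.1 q.2 / G ρ q.2 * μ q.1 * μ q.2
      rw [ENNReal.tsum_add, two_mul, energy, ← ENNReal.tsum_prod]
      exact congrArg (_ + ·) hswap

variable [MeasurableSpace Y]

def HasCylinderWeights (p : Y → Y → ℝ≥0∞) (P : Y → Measure (ℕ → Y)) : Prop :=
  ∀ x f n, P x {ω | ∀ i ≤ n, ω i = f i} = pathWeight p x n f

noncomputable def greenFn (P : Y → Measure (ℕ → Y)) (x y : Y) : ℝ≥0∞ := ∑' n, P x {ω | ω n = y}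

lemma one_le_greenFn_self {p : Y → Y → ℝ≥0∞} {P : Y → Measure (ℕ → Y)}
    (hP : HasCylinderWeights p P) (x : Y) : 1 ≤ greenFn P x x := by
  have hstart : P x {ω | ω 0 = x} = 1 := by
    simpa [pathWeight] using hP x (fun _ => x) 0
  exact hstart.symm.le.trans (ENNReal.le_tsum (f := fun n => P x {ω | ω n = x}) 0)

variable [MeasurableSingletonClass Y]

lemma measurableSet_eval_eq (n : ℕ) (y : Y) : MeasurableSet {ω : ℕ → Y | ω n = y} :=
  (measurableSet_singleton y).preimage (measurable_pi_apply n)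

lemma measurableSet_cylinder (n : ℕ) (f : ℕ → Y) :
    MeasurableSet {ω : ℕ → Y | ∀ i ≤ n, ω i = f i} := by
  simp only [Set.ofPred_forall]
  exact .iInter fun i => .iInter fun _ => measurableSet_eval_eq i (f i)

lemma measurable_visitCount (y : Y) : Measurable (visitCount y) :=
  .tsum fun n => measurable_const.indicator (measurableSet_eval_eq n y)

lemma lintegral_visitCount (μ : Measure (ℕ → Y)) (y : Y) :
    ∫⁻ ω, visitCount y ω ∂μ = ∑' n, μ {ω | ω n = y} := by
  unfold visitCount
  rw [lintegral_tsum fun n =>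
    (measurable_one.indicator (measurableSet_eval_eq n y)).aemeasurable]
  exact tsum_congr fun n => lintegral_indicator_one (measurableSet_eval_eq n y)

lemma lintegral_visitCount_mul (μ : Measure (ℕ → Y)) (x y : Y) :
    ∫⁻ ω, visitCount x ω * visitCount y ω ∂μ = ∑' q : ℕ × ℕ, μ {ω | ω q.1 = x ∧ ω q.2 = y} := by
  have hmeas (q : ℕ × ℕ) : MeasurableSet {ω : ℕ → Y | ω q.1 = x ∧ ω q.2 = y} :=
    (measurableSet_eval_eq q.1 x).inter (measurableSet_eval_eq q.2 y)
  have hprod (ω : ℕ → Y) : visitCount x ω * visitCount y ω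
      = ∑' q : ℕ × ℕ, {ω' : ℕ → Y | ω' q.1 = x ∧ ω' q.2 = y}.indicator 1 ω := by
    rw [visitCount, visitCount, ENNReal.tsum_mul_tsum]
    exact tsum_congr fun q => (congrFun (Set.inter_indicator_one ..) ω).symm
  simp_rw [hprod]
  rw [lintegral_tsum fun q => (measurable_one.indicator (hmeas q)).aemeasurable]
  exact tsum_congr fun q => lintegral_indicator_one (hmeas q)

variable [Countable Y] {p : Y → Y → ℝ≥0∞} {P : Y → Measure (ℕ → Y)}

lemma measurable_weightedVisits (c : Y → ℝ≥0∞) : Measurable (weightedVisits c) :=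
  .tsum fun y => (measurable_visitCount y).const_mul (c y)

lemma measure_eq_tsum_pathWeight (hP : HasCylinderWeights p P) (x : Y) (n : ℕ)
    {Q : (ℕ → Y) → Prop} (hQ : ∀ ω, Q (stopAt n ω) ↔ Q ω) :
    P x {ω | Q ω} = ∑' v : StoppedPaths Y n Q, pathWeight p x n v.1 := by
  have hunion : {ω | Q ω} = ⋃ v : StoppedPaths Y n Q, {ω | ∀ i ≤ n, ω i = v.1 i} := by
    ext ω
    simp only [Set.mem_ofPred_eq, Set.mem_iUnion]
    constructor
    · exact fun hω => ⟨⟨stopAt n ω, stopAt_idem n ω, (hQ ω).2 hω⟩,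
        (forall_le_eq_iff_stopAt_eq (stopAt_idem n ω)).2 rfl⟩
    · rintro ⟨v, hω⟩
      rw [forall_le_eq_iff_stopAt_eq v.2.1] at hω
      exact (hQ ω).1 (hω ▸ v.2.2)
  have hdisj : Pairwise (Function.onFun Disjoint
      fun v : StoppedPaths Y n Q => {ω : ℕ → Y | ∀ i ≤ n, ω i = v.1 i}) := by
    intro v w hvw
    refine Set.disjoint_left.2 fun ω hv hw => hvw (Subtype.ext ?_)
    rw [Set.mem_ofPred_eq, forall_le_eq_iff_stopAt_eq v.2.1] at hv
    rw [Set.mem_ofPred_eq, forall_le_eq_iff_stopAt_eq w.2.1] at hw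
    exact hv.symm.trans hw
  rw [hunion, measure_iUnion hdisj fun v => measurableSet_cylinder n v.1]
  exact tsum_congr fun v => hP x v.1 n

lemma measure_eval_zero_ne_self (hP : HasCylinderWeights p P) (x : Y) :
    P x {ω | ω 0 ≠ x} = 0 := by
  rw [measure_eq_tsum_pathWeight hP x 0 fun ω => by simp [stopAt]]
  exact ENNReal.tsum_eq_zero.2 fun v => by simp [pathWeight, v.2.2]

/-- The Markov property at the deterministic time `m`. -/
theorem measure_eval_eq_and_eval_add_eq (hP : HasCylinderWeights p P) (ρ x y : Y) (m k : ℕ) :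
    P ρ {ω | ω m = x ∧ ω (m + k) = y} = P ρ {ω | ω m = x} * P x {ω | ω k = y} := by
  have hstart : P x {ω | ω k = y} = P x {ω | ω 0 = x ∧ ω k = y} := by
    rw [← measure_inter_conull (t := {ω | ω 0 = x})]
    · congr 1; ext ω; exact and_comm
    · simpa [Set.compl_ofPred] using measure_eval_zero_ne_self hP x
  rw [hstart, measure_eq_tsum_pathWeight hP ρ (m + k) fun ω => by simp [stopAt],
    measure_eq_tsum_pathWeight hP ρ m fun ω => by simp [stopAt],
    measure_eq_tsum_pathWeight hP x k fun ω => by simp [stopAt],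
    ENNReal.tsum_mul_tsum, ← (concatEquiv m k x y).tsum_eq]
  exact tsum_congr fun gh => pathWeight_concatAt p gh.1.2.2 gh.2.2.2.1

lemma tsum_measure_eval_eq_and_eval_add_eq (hP : HasCylinderWeights p P) (ρ x y : Y) :
    ∑' q : ℕ × ℕ, P ρ {ω | ω q.1 = x ∧ ω (q.1 + q.2) = y} = greenFn P ρ x * greenFn P x y := by
  simp only [measure_eval_eq_and_eval_add_eq hP, greenFn, ENNReal.tsum_mul_tsum]

lemma lintegral_visitCount_mul_le (hP : HasCylinderWeights p P) (ρ x y : Y) :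
    ∫⁻ ω, visitCount x ω * visitCount y ω ∂P ρ
      ≤ greenFn P ρ x * greenFn P x y + greenFn P ρ y * greenFn P y x := by
  rw [lintegral_visitCount_mul, ← tsum_measure_eval_eq_and_eval_add_eq hP,
    ← tsum_measure_eval_eq_and_eval_add_eq hP]
  refine (tsum_prod_le_tsum_add_tsum fun q => P ρ {ω | ω q.1 = x ∧ ω q.2 = y}).trans_eq ?_
  simp only [and_comm]

lemma lintegral_weightedVisits (μ : Measure (ℕ → Y)) (c : Y → ℝ≥0∞) :
    ∫⁻ ω, weightedVisits c ω ∂μ = ∑' y, c y * ∑' n, μ {ω | ω n = y} := by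
  unfold weightedVisits
  rw [lintegral_tsum fun y => ((measurable_visitCount y).const_mul (c y)).aemeasurable]
  exact tsum_congr fun y => by
    rw [lintegral_const_mul _ (measurable_visitCount y), lintegral_visitCount]

lemma lintegral_weightedVisits_sq_le (hP : HasCylinderWeights p P) (ρ : Y) (c : Y → ℝ≥0∞) :
    ∫⁻ ω, weightedVisits c ω ^ 2 ∂P ρ ≤ ∑' q : Y × Y, c q.1 * c q.2 *
      (greenFn P ρ q.1 * greenFn P q.1 q.2 + greenFn P ρ q.2 * greenFn P q.2 q.1) := by
  have hmeas (q : Y × Y) : Measurable fun ω => visitCount q.1 ω * visitCount q.2 ω :=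
    (measurable_visitCount q.1).mul (measurable_visitCount q.2)
  have hsq (ω : ℕ → Y) : weightedVisits c ω ^ 2
      = ∑' q : Y × Y, c q.1 * c q.2 * (visitCount q.1 ω * visitCount q.2 ω) := by
    rw [sq, weightedVisits, ENNReal.tsum_mul_tsum]
    exact tsum_congr fun q => by ring
  simp_rw [hsq]
  rw [lintegral_tsum fun q => ((hmeas q).const_mul _).aemeasurable]
  refine ENNReal.tsum_le_tsum fun q => ?_
  rw [lintegral_const_mul _ (hmeas q)]
  exact mul_le_mul_right (lintegral_visitCount_mul_le hP ρ q.1 q.2) _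

theorem inv_two_mul_energy_le_measure_hits_support (hP : HasCylinderWeights p P) {ρ : Y}
    (hGfin : ∀ y, greenFn P ρ y ≠ ⊤) {μ : Y → ℝ≥0∞} (hμ : ∑' y, μ y = 1) :
    (2 * energy (fun x y => greenFn P x y / greenFn P ρ y) μ)⁻¹
      ≤ P ρ {ω | ∃ n, μ (ω n) ≠ 0} := by
  set I := energy (fun x y => greenFn P x y / greenFn P ρ y) μ
  rcases eq_or_ne I ⊤ with hI | hI
  · simp [hI]
  have hG0 (y : Y) (hy : μ y ≠ 0) : greenFn P ρ y ≠ 0 := fun h0 => hI <| top_le_iff.1 <|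
    calc ⊤ = greenFn P y y / greenFn P ρ y * μ y * μ y := by
          rw [h0, ENNReal.div_zero (zero_lt_one.trans_le (one_le_greenFn_self hP y)).ne',
            ENNReal.top_mul hy, ENNReal.top_mul hy]
      _ ≤ I := (ENNReal.le_tsum y).trans (ENNReal.le_tsum (f := fun x => ∑' y, _) y)
  set c : Y → ℝ≥0∞ := fun y => μ y / greenFn P ρ y
  have hfirst : ∫⁻ ω, weightedVisits c ω ∂P ρ = 1 := by
    rw [lintegral_weightedVisits, ← hμ]
    refine tsum_congr fun y => ?_
    rcases eq_or_ne (μ y) 0 with hy | hy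
    · simp [c, hy]
    · exact ENNReal.div_mul_cancel (hG0 y hy) (hGfin y)
  have hsecond : ∫⁻ ω, weightedVisits c ω ^ 2 ∂P ρ ≤ 2 * I :=
    (lintegral_weightedVisits_sq_le hP ρ c).trans (tsum_mul_green_le_two_mul_energy _ ρ μ)
  have hsupport : {ω | weightedVisits c ω ≠ 0} ⊆ {ω | ∃ n, μ (ω n) ≠ 0} := fun ω hω => by
    obtain ⟨n, hn⟩ := not_forall.1 (mt weightedVisits_eq_zero_iff.2 hω)
    exact ⟨n, fun h => hn (by simp [c, h])⟩
  have hone : 1 ≤ 2 * I * P ρ {ω | ∃ n, μ (ω n) ≠ 0} :=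
    calc 1 = (∫⁻ ω, weightedVisits c ω ∂P ρ) ^ 2 := by rw [hfirst, one_pow]
      _ ≤ (∫⁻ ω, weightedVisits c ω ^ 2 ∂P ρ) * P ρ {ω | weightedVisits c ω ≠ 0} :=
        lintegral_sq_le_mul_measure_ne_zero _ (measurable_weightedVisits c)
      _ ≤ 2 * I * P ρ {ω | ∃ n, μ (ω n) ≠ 0} := by gcongr
  have hpos : 2 * I * P ρ {ω | ∃ n, μ (ω n) ≠ 0} ≠ 0 := (zero_lt_one.trans_le hone).ne'
  exact (ENNReal.inv_le_iff_le_mul (fun _ => left_ne_zero_of_mul hpos)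
    (fun h => absurd h (ENNReal.mul_ne_top ENNReal.ofNat_ne_top hI))).2 hone

end MarkovChain

open MarkovChain

theorem stmt1_general
    (Y : Type*) [Countable Y] [MeasurableSpace Y] [MeasurableSingletonClass Y]
    (p : Y → Y → ℝ≥0∞)
    (P : Y → Measure (ℕ → Y))
    (hcyl : ∀ (x : Y) (f : ℕ → Y) (n : ℕ),
      P x {ω | ∀ i ≤ n, ω i = f i} =
        (if f 0 = x then 1 else 0) * ∏ i ∈ Finset.range n, p (f i) (f (i + 1)))
    (ρ : Y)
    (G : Y → Y → ℝ≥0∞) (hGdef : ∀ x y, G x y = ∑' n : ℕ, P x {ω | ω n = y})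
    (hGfin : ∀ x y, G x y < ∞)
    (K : Y → Y → ℝ≥0∞) (hK : ∀ x y, K x y = G x y / G ρ y)
    (Λ : Set Y) :
    2⁻¹ * capK K Λ ≤ P ρ {ω | ∃ n, ω n ∈ Λ} := by
  obtain rfl : G = greenFn P := funext₂ hGdef
  obtain rfl : K = fun x y => greenFn P x y / greenFn P ρ y := funext₂ hK
  rw [capK, ENNReal.inv_iInf, ENNReal.mul_iSup]
  refine iSup_le fun ⟨μ, hμ, hμΛ⟩ => ?_
  calc 2⁻¹ * (energy _ μ)⁻¹ = (2 * energy _ μ)⁻¹ := (ENNReal.mul_inv (by simp) (by simp)).symm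
    _ ≤ P ρ {ω | ∃ n, μ (ω n) ≠ 0} :=
      inv_two_mul_energy_le_measure_hits_support hcyl (fun y => (hGfin ρ y).ne) hμ
    _ ≤ P ρ {ω | ∃ n, ω n ∈ Λ} :=
      measure_mono fun ω ⟨n, hn⟩ => ⟨n, of_not_not fun h => hn (hμΛ _ h)⟩

/-- Lower bound: the probability that a transient Markov chain started at `ρ`
ever visits `Λ` is at least half the Martin capacity of `Λ`. -/
theorem stmt1
    (Y : Type*) [Countable Y] [MeasurableSpace Y] [MeasurableSingletonClass Y]
    (p : Y → Y → ℝ≥0∞) (hp : ∀ x, ∑' y, p x y = 1)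
    (P : Y → Measure (ℕ → Y)) (hprob : ∀ x, IsProbabilityMeasure (P x))
    (hcyl : ∀ (x : Y) (f : ℕ → Y) (n : ℕ),
      P x {ω | ∀ i ≤ n, ω i = f i} =
        (if f 0 = x then 1 else 0) * ∏ i ∈ Finset.range n, p (f i) (f (i + 1)))
    (ρ : Y)
    (G : Y → Y → ℝ≥0∞) (hGdef : ∀ x y, G x y = ∑' n : ℕ, P x {ω | ω n = y})
    (hGfin : ∀ x y, G x y < ∞)
    (K : Y → Y → ℝ≥0∞) (hK : ∀ x y, K x y = G x y / G ρ y)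
    (Λ : Set Y) :
    2⁻¹ * capK K Λ ≤ P ρ {ω | ∃ n, ω n ∈ Λ} :=
  stmt1_general Y p P hcyl ρ G hGdef hGfin K hK Λ
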